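/- arXiv:1908.08678 — 2 statements merged into one kernel-verified Lean document; each statement's English description precedes it below -/
import Mathlib

section
/- Let g be an automorphism of the left R-module R, where R = F_p^{(d)}[Π]/(Π^d) with Π α = α^Q Π, viewed as a d-dimensional F_p^{(d)}-vector space with basis {1, Π, ..., Π^{d−1}}, and suppose g commutes with left multiplication by all elements of R. If g(1) = α_1 + α_2 Π + ··· + α_d Π^{d−1}, then the matrix of g in this basis is lower triangular with diagonal entries α_1, α_1^Q, α_1^{Q²}, ..., α_1^{Q^{d−1}}, and hence det(g) = α_1^{1+Q+···+Q^{d−1}} = Nr_{F_p^{(d)}/F_p}(α_1). -/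
/-!
Since `g` commutes with left multiplication, `g (Π ^ j) = Π ^ j * g 1`. Moving `Π ^ j` past the
coefficients of `g 1` raises them to the power `Q ^ j` and shifts every power of `Π` up by `j`,
the terms reaching `Π ^ d` vanishing. So the `j`-th column of the matrix of `g` is its first column
shifted down by `j` and twisted by `x ↦ x ^ Q ^ j`, which is lower triangular with diagonal
entries `α₁ ^ Q ^ j`.
-/

open Finset

theorem pow_mul_of_twist {L R : Type*} [Monoid L] [Monoid R] {ι : L → R} {Pi : R} {Q : ℕ}
    (htwist : ∀ α, Pi * ι α = ι (α ^ Q) * Pi) (j : ℕ) (α : L) :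
    Pi ^ j * ι α = ι (α ^ Q ^ j) * Pi ^ j := by
  induction j generalizing α with
  | zero => simp
  | succ j ih =>
    rw [pow_succ, mul_assoc, htwist, ← mul_assoc, ih, mul_assoc, ← pow_succ, ← pow_mul,
      ← pow_succ']

theorem pow_mul_sum_range_of_twist {L R : Type*} [Semiring L] [Semiring R] {ι : L →+* R}
    {Pi : R} {Q d : ℕ} (hnil : Pi ^ d = 0) (htwist : ∀ α, Pi * ι α = ι (α ^ Q) * Pi)
    (c : ℕ → L) {j : ℕ} (hj : j ≤ d) :
    Pi ^ j * ∑ i ∈ range d, ι (c i) * Pi ^ i =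
      ∑ i ∈ range d, ι (if j ≤ i then c (i - j) ^ Q ^ j else 0) * Pi ^ i := by
  have hterm (i : ℕ) : Pi ^ j * (ι (c i) * Pi ^ i) = ι (c i ^ Q ^ j) * Pi ^ (j + i) := by
    rw [← mul_assoc, pow_mul_of_twist htwist, mul_assoc, ← pow_add]
  have hvanish : ∑ i ∈ Ico (d - j) d, ι (c i ^ Q ^ j) * Pi ^ (j + i) = 0 :=
    sum_eq_zero fun i hi => by
      rw [pow_eq_zero_of_le (by simp at hi; omega) hnil, mul_zero]
  calc Pi ^ j * ∑ i ∈ range d, ι (c i) * Pi ^ i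
      = ∑ i ∈ range (d - j), ι (c i ^ Q ^ j) * Pi ^ (j + i) := by
        rw [mul_sum, ← sum_range_add_sum_Ico _ (Nat.sub_le d j)]
        simp only [hterm, hvanish, add_zero]
    _ = ∑ i ∈ Ico j d, ι (c (i - j) ^ Q ^ j) * Pi ^ i := by
        rw [sum_Ico_eq_sum_range]
        simp
    _ = _ := by
        rw [← sum_range_add_sum_Ico _ hj, sum_eq_zero (s := range j) fun i hi => ?_, zero_add]
        · exact sum_congr rfl fun i hi => by rw [if_pos (mem_Ico.1 hi).1]
        · rw [if_neg (by simp at hi; omega), map_zero, zero_mul]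

def twistMatrix {L : Type*} [Semiring L] (d Q : ℕ) (c : ℕ → L) : Matrix (Fin d) (Fin d) L :=
  Matrix.of fun i j => if (j : ℕ) ≤ i then c (i - j) ^ Q ^ (j : ℕ) else 0

section
variable {L : Type*} {d Q : ℕ}

theorem twistMatrix_apply_of_lt [Semiring L] (c : ℕ → L) {i j : Fin d} (h : i < j) :
    twistMatrix d Q c i j = 0 :=
  if_neg (not_le.2 h)

theorem twistMatrix_apply_self [Semiring L] (c : ℕ → L) (i : Fin d) :
    twistMatrix d Q c i i = c 0 ^ Q ^ (i : ℕ) := by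
  simp [twistMatrix]

theorem det_twistMatrix [CommRing L] (c : ℕ → L) :
    (twistMatrix d Q c).det = c 0 ^ ∑ i ∈ range d, Q ^ i := by
  rw [Matrix.det_of_isLowerTriangular _ fun i j h => twistMatrix_apply_of_lt c h]
  simp only [twistMatrix_apply_self, prod_pow_eq_pow_sum, Fin.sum_univ_eq_sum_range (Q ^ ·)]

end

theorem stmt_6_general (L : Type) [Field L]
    (Q d : ℕ) (hd : 0 < d)
    (R : Type) [Ring R] (ι : L →+* R) (Pi : R)
    (hnil : Pi ^ d = 0) (htwist : ∀ α : L, Pi * ι α = ι (α ^ Q) * Pi)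
    (g : R → R)
    (hgcomm : ∀ r x : R, g (r * x) = r * g x)
    (a : Fin d → L) (hg1 : g 1 = ∑ i : Fin d, ι (a i) * Pi ^ (i : ℕ)) :
    ∃ M : Matrix (Fin d) (Fin d) L,
      (∀ j : Fin d, g (Pi ^ (j : ℕ)) = ∑ i : Fin d, ι (M i j) * Pi ^ (i : ℕ)) ∧
      (∀ i j : Fin d, i < j → M i j = 0) ∧
      (∀ i : Fin d, M i i = (a ⟨0, hd⟩) ^ (Q ^ (i : ℕ))) ∧
      M.det = (a ⟨0, hd⟩) ^ (∑ i ∈ Finset.range d, Q ^ i) := by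
  set c : ℕ → L := fun i => if h : i < d then a ⟨i, h⟩ else 0
  have hc0 : c 0 = a ⟨0, hd⟩ := dif_pos hd
  have hg1' : g 1 = ∑ i ∈ range d, ι (c i) * Pi ^ i := by
    rw [hg1, ← Fin.sum_univ_eq_sum_range (fun i => ι (c i) * Pi ^ i)]
    simp [c]
  refine ⟨twistMatrix d Q c, fun j => ?_, fun i j => twistMatrix_apply_of_lt c,
    fun i => by rw [twistMatrix_apply_self, hc0], by rw [det_twistMatrix, hc0]⟩
  calc g (Pi ^ (j : ℕ)) = Pi ^ (j : ℕ) * g 1 := by simpa using hgcomm (Pi ^ (j : ℕ)) 1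
    _ = ∑ i ∈ range d, ι (if (j : ℕ) ≤ i then c (i - j) ^ Q ^ (j : ℕ) else 0) * Pi ^ i := by
      rw [hg1', pow_mul_sum_range_of_twist hnil htwist c j.is_le']
    _ = _ := (Fin.sum_univ_eq_sum_range _ d).symm

/-- Let `g` be an automorphism of the left `R`-module `R`, where `R = F_p^{(d)}[Π]/(Π^d)`
with `Π α = α^Q Π`, viewed as a `d`-dimensional `F_p^{(d)}`-vector space with basis
`{1, Π, ..., Π^{d−1}}`, commuting with left multiplication by all elements of `R`.
If `g(1) = α_1 + α_2 Π + ··· + α_d Π^{d−1}`, then the matrix `M` of `g` in this basis is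
lower triangular with diagonal entries `α_1, α_1^Q, α_1^{Q²}, ..., α_1^{Q^{d−1}}`, and hence
`det(g) = α_1^{1+Q+···+Q^{d−1}} = Nr_{F_p^{(d)}/F_p}(α_1)`. -/
theorem stmt_6 (Fp L : Type) [Field Fp] [Fintype Fp] [Field L] [Fintype L] [Algebra Fp L]
    (Q d : ℕ) (hQ : Fintype.card Fp = Q) (hd : 0 < d) (hdeg : Module.finrank Fp L = d)
    (R : Type) [Ring R] (ι : L →+* R) (Pi : R)
    (hnil : Pi ^ d = 0) (htwist : ∀ α : L, Pi * ι α = ι (α ^ Q) * Pi)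
    (hbasis : Function.Bijective (fun f : Fin d → L => ∑ i : Fin d, ι (f i) * Pi ^ (i : ℕ)))
    (g : R → R) (hgbij : Function.Bijective g)
    (hgcomm : ∀ r x : R, g (r * x) = r * g x)
    (a : Fin d → L) (hg1 : g 1 = ∑ i : Fin d, ι (a i) * Pi ^ (i : ℕ)) :
    ∃ M : Matrix (Fin d) (Fin d) L,
      (∀ j : Fin d, g (Pi ^ (j : ℕ)) = ∑ i : Fin d, ι (M i j) * Pi ^ (i : ℕ)) ∧
      (∀ i j : Fin d, i < j → M i j = 0) ∧
      (∀ i : Fin d, M i i = (a ⟨0, hd⟩) ^ (Q ^ (i : ℕ))) ∧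
      M.det = (a ⟨0, hd⟩) ^ (∑ i ∈ Finset.range d, Q ^ i) :=
  stmt_6_general L Q d hd R ι Pi hnil htwist g hgcomm a hg1
end

section
/- Let q be a prime power, 𝔶 ∈ F_q[T] monic irreducible, and let π, π' be the two roots (in an algebraic closure of F = F_q(T)) of a quadratic X² − aX + b with a, b ∈ F_q[T], b = μ𝔶 for some μ ∈ F_q^×, and deg(a) ≤ deg(𝔶)/2. Then for every r ≥ 1, 𝔶 divides π^r + (π')^r in F_q[T] if and only if a = 0. -/
/-!
The power sums `π ^ n + π' ^ n` are the values at `a = π + π'` of the Dickson polynomials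
`D_n(X, b)` with `b = π π'`, so they lie in `F_q[T]`. Modulo `b` the Dickson polynomial
`D_n(X, b)` reduces to `D_n(X, 0) = X ^ n`, hence `𝔶 ∣ b` gives `π ^ r + π' ^ r ≡ a ^ r (mod 𝔶)`.
Since `𝔶` is prime, `𝔶 ∣ a ^ r` forces `𝔶 ∣ a`, and `deg a < deg 𝔶` then forces `a = 0`.
-/

namespace Polynomial

variable {R S : Type*} [CommRing R] [CommRing S]

theorem dickson_one_eval_add (x y : R) :
    ∀ n, (dickson 1 (x * y) n).eval (x + y) = x ^ n + y ^ n
  | 0 => by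
    simp only [pow_zero, dickson_zero]
    norm_num
  | 1 => by simp only [eval_X, dickson_one, pow_one]
  | n + 2 => by
    simp only [dickson_add_two, eval_sub, eval_mul, eval_X, eval_C, dickson_one_eval_add x y _]
    ring

theorem dickson_one_zero_of_ne_zero : ∀ {n : ℕ}, n ≠ 0 → dickson 1 (0 : R) n = X ^ n
  | 1, _ => by rw [dickson_one, pow_one]
  | n + 2, _ => by
    rw [dickson_add_two, dickson_one_zero_of_ne_zero n.succ_ne_zero, C_0, zero_mul, sub_zero,
      ← pow_succ']

theorem dvd_dickson_one_eval_sub_pow (a b : R) {n : ℕ} (hn : n ≠ 0) :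
    b ∣ (dickson 1 b n).eval a - a ^ n := by
  let f := Ideal.Quotient.mk (Ideal.span {b})
  have hfb : f b = 0 := Ideal.Quotient.eq_zero_iff_mem.2 (Ideal.mem_span_singleton_self b)
  have hf : f ((dickson 1 b n).eval a) = f (a ^ n) := by
    rw [← eval₂_at_apply, ← eval_map, map_dickson, hfb, dickson_one_zero_of_ne_zero hn,
      eval_pow, eval_X, map_pow]
  exact Ideal.mem_span_singleton.1 (Ideal.Quotient.eq.1 hf)

theorem map_dickson_one_eval_eq_pow_add_pow (ι : R →+* S) {a b : R} {x y : S}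
    (hsum : x + y = ι a) (hprod : x * y = ι b) (n : ℕ) :
    ι ((dickson 1 b n).eval a) = x ^ n + y ^ n := by
  rw [← eval₂_at_apply, ← eval_map, map_dickson, ← hsum, ← hprod, dickson_one_eval_add]

theorem eq_zero_of_dvd_pow_of_natDegree_lt {A : Type*} [CommSemiring A] [NoZeroDivisors A]
    {p a : A[X]} (hp : Prime p) {n : ℕ} (hdvd : p ∣ a ^ n) (hdeg : a.natDegree < p.natDegree) : a = 0 := by
  by_contra ha
  exact (natDegree_le_of_dvd (hp.dvd_of_dvd_pow hdvd) ha).not_gt hdeg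

end Polynomial

theorem stmt_19_general
    (Fq : Type) [Field Fq]
    (𝔶 : Polynomial Fq) (h𝔶 : Irreducible 𝔶)
    (a : Polynomial Fq) (μ : Fq)
    (hdeg : 2 * a.natDegree ≤ 𝔶.natDegree)
    (L : Type) [Field L] (ι : Polynomial Fq →+* L) (hinj : Function.Injective ι)
    (π π' : L) (hsum : π + π' = ι a) (hprod : π * π' = ι (Polynomial.C μ * 𝔶)) :
    ∀ r : ℕ, 1 ≤ r → ∀ s : Polynomial Fq, ι s = π ^ r + π' ^ r → (𝔶 ∣ s ↔ a = 0) := by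
  intro r hr s hs
  have hs_dickson : s = (Polynomial.dickson 1 (Polynomial.C μ * 𝔶) r).eval a :=
    hinj (hs.trans (Polynomial.map_dickson_one_eval_eq_pow_add_pow ι hsum hprod r).symm)
  have hcong : 𝔶 ∣ s - a ^ r := hs_dickson ▸
    (dvd_mul_left 𝔶 _).trans (Polynomial.dvd_dickson_one_eval_sub_pow a _ (by omega))
  have hdeg' : a.natDegree < 𝔶.natDegree := by linarith [h𝔶.natDegree_pos]
  rw [dvd_iff_dvd_of_dvd_sub hcong]
  refine ⟨fun h ↦ Polynomial.eq_zero_of_dvd_pow_of_natDegree_lt h𝔶.prime h hdeg', fun ha ↦ ?_⟩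
  rw [ha, zero_pow (by omega)]
  exact dvd_zero 𝔶

/-- Let `q` be a prime power, `𝔶 ∈ F_q[T]` monic irreducible, and let `π, π'` be the two
roots (in a field `L` containing `F_q[T]` via an embedding `ι`) of the quadratic
`X² − aX + b` with `a, b ∈ F_q[T]`, `b = μ𝔶` for some `μ ∈ F_q^×`, and
`deg(a) ≤ deg(𝔶)/2`.  Then for every `r ≥ 1`, `𝔶` divides `π^r + (π')^r` in `F_q[T]`
(i.e. divides the element `s ∈ F_q[T]` with `ι s = π^r + (π')^r`) if and only if `a = 0`. -/
theorem stmt_19 (q : ℕ) (hq : ∃ p n : ℕ, p.Prime ∧ 0 < n ∧ q = p ^ n)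
    (Fq : Type) [Field Fq] [Fintype Fq] (hcard : Fintype.card Fq = q)
    (𝔶 : Polynomial Fq) (h𝔶 : Irreducible 𝔶) (hm : 𝔶.Monic)
    (a : Polynomial Fq) (μ : Fq) (hμ : μ ≠ 0)
    (hdeg : 2 * a.natDegree ≤ 𝔶.natDegree)
    (L : Type) [Field L] (ι : Polynomial Fq →+* L) (hinj : Function.Injective ι)
    (π π' : L) (hsum : π + π' = ι a) (hprod : π * π' = ι (Polynomial.C μ * 𝔶)) :
    ∀ r : ℕ, 1 ≤ r → ∀ s : Polynomial Fq, ι s = π ^ r + π' ^ r → (𝔶 ∣ s ↔ a = 0) :=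
  stmt_19_general Fq 𝔶 h𝔶 a μ hdeg L ι hinj π π' hsum hprod
end
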